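/- Fix K, r ∈ [1,∞) and, for each i ∈ ℕ₀ = ℕ ∪ {0}, let f_i : ℝ → ℝ be K-Lipschitz continuous with |f_i(0)| ≤ K. Define g_d : ℝ^d → ℝ by g_d(x) = f_0(Σ_{i=1}^d f_i(x_i)). Then for every d ∈ ℕ and ε ∈ (0,1] there exists a skeleton φ with ReLU-realization R_ReLU(φ) : ℝ^d → ℝ such that: 1) sup_{x∈[−r,r]^d} |g_d(x) − R_ReLU(φ)(x)| ≤ ε; 2) R_ReLU(φ) is √d·K²-Lipschitz on ℝ^d; 3) P(φ) ≤ (5/6)·10³·K⁴·r·d⁶·ε^{−1}. -/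

import Mathlib

open scoped BigOperators ENNReal

noncomputable section

/-- The rectified linear unit activation function. -/
def ReLU (x : ℝ) : ℝ := max x 0

/-- Truncation of a real sequence to its first `n` entries. -/
def trunc (n : ℕ) (x : ℕ → ℝ) : ℕ → ℝ := fun j => if j < n then x j else 0

/-- Embedding of a Euclidean vector into the space of real sequences. -/
def emb (n : ℕ) (x : EuclideanSpace ℝ (Fin n)) : ℕ → ℝ :=
  fun j => if h : j < n then x ⟨j, h⟩ else 0

/-- A neural network skeleton of depth `Dm + 1`.  The layer dimensions are
`l 0, …, l (Dm + 1)`; the weight matrix of layer `k + 1` is `V k` (a matrix of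
size `l (k+1) × l k`, stored as a doubly indexed sequence) and its bias is `b k`.
Entries beyond the relevant ranges are irrelevant junk. -/
structure NN where
  Dm : ℕ
  l : ℕ → ℕ
  V : ℕ → ℕ → ℕ → ℝ
  b : ℕ → ℕ → ℝ

namespace NN

/-- Depth `D(φ)` of a skeleton. -/
def depth (φ : NN) : ℕ := φ.Dm + 1

/-- Number of parameters `P(φ) = ∑_{k=1}^{D} l_k (l_{k-1} + 1)`. -/
def P (φ : NN) : ℕ := ∑ k ∈ Finset.range φ.depth, φ.l (k + 1) * (φ.l k + 1)

/-- The affine map `A_{k+1}(x) = V_{k+1} x + b_{k+1}` of a skeleton. -/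
def aff (φ : NN) (k : ℕ) (x : ℕ → ℝ) : ℕ → ℝ :=
  fun i => (∑ j ∈ Finset.range (φ.l k), φ.V k i j * x j) + φ.b k i

/-- State after `k` layers, with the activation applied after each affine map. -/
def hidden (a : ℝ → ℝ) (φ : NN) : ℕ → (ℕ → ℝ) → ℕ → ℝ
  | 0 => fun x => x
  | k + 1 => fun x i => a (φ.aff k (φ.hidden a k x) i)

/-- The `a`-realization `R_a(φ) = A_D ∘ a ∘ A_{D-1} ∘ ⋯ ∘ a ∘ A_1`, acting on
sequences (only the first `l 0` input coordinates and the first `l D` output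
coordinates are meaningful). -/
def fullReal (a : ℝ → ℝ) (φ : NN) (x : ℕ → ℝ) : ℕ → ℝ :=
  φ.aff φ.Dm (φ.hidden a φ.Dm (trunc (φ.l 0) x))

/-- The `a`-realization as a map `ℝ^m → ℝ^n` (meaningful when `l 0 = m` and
`l D = n`). -/
def realAs (a : ℝ → ℝ) (φ : NN) (m n : ℕ) (x : EuclideanSpace ℝ (Fin m)) :
    EuclideanSpace ℝ (Fin n) :=
  WithLp.toLp 2 (fun i : Fin n => φ.fullReal a (emb m x) i)

/-- The `a`-realization as a scalar-valued map `ℝ^m → ℝ`. -/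
def realScalar (a : ℝ → ℝ) (φ : NN) (m : ℕ) (x : EuclideanSpace ℝ (Fin m)) : ℝ :=
  φ.fullReal a (emb m x) 0

/-- The `a`-realization as a map `ℝ → ℝ`. -/
def real1 (a : ℝ → ℝ) (φ : NN) (x : ℝ) : ℝ :=
  φ.fullReal a (fun j => if j = 0 then x else 0) 0

/-- Concatenation `ψ ∘ φ` of two skeletons (meaningful when
`l_{D(φ)}(φ) = l_0(ψ)`). -/
def comp (ψ φ : NN) : NN where
  Dm := φ.Dm + ψ.Dm
  l := fun k => if k < φ.depth then φ.l k else ψ.l (k + 1 - φ.depth)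
  V := fun k =>
    if k < φ.Dm then φ.V k
    else if k = φ.Dm then fun i j => ∑ m ∈ Finset.range (ψ.l 0), ψ.V 0 i m * φ.V φ.Dm m j
    else ψ.V (k - φ.Dm)
  b := fun k =>
    if k < φ.Dm then φ.b k
    else if k = φ.Dm then
      fun i => (∑ m ∈ Finset.range (ψ.l 0), ψ.V 0 i m * φ.b φ.Dm m) + ψ.b 0 i
    else ψ.b (k - φ.Dm)

/-- Offset of the `q`-th block in layer `k` of a parallelization. -/
def poff (ν : ℕ → NN) (k q : ℕ) : ℕ := ∑ j ∈ Finset.range q, (ν j).l k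

/-- Parallelization `p(φ_1, …, φ_n)` of `n` skeletons (meaningful when they all
have the same depth): block-diagonal weight matrices and concatenated biases. -/
def parallel (n : ℕ) (ν : ℕ → NN) : NN where
  Dm := (ν 0).Dm
  l := fun k => ∑ j ∈ Finset.range n, (ν j).l k
  V := fun k i j =>
    ∑ q ∈ Finset.range n,
      if poff ν (k + 1) q ≤ i ∧ i < poff ν (k + 1) q + (ν q).l (k + 1) ∧
          poff ν k q ≤ j ∧ j < poff ν k q + (ν q).l k then
        (ν q).V k (i - poff ν (k + 1) q) (j - poff ν k q)
      else 0
  b := fun k i =>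
    ∑ q ∈ Finset.range n,
      if poff ν (k + 1) q ≤ i ∧ i < poff ν (k + 1) q + (ν q).l (k + 1) then
        (ν q).b k (i - poff ν (k + 1) q)
      else 0

/-- The activation `a` fulfills the `c`-identity requirement, witnessed by the
skeleton `I`: `I` has depth 2, input and output dimension 1, hidden dimension
at most `c`, and its `a`-realization is the identity on `ℝ`. -/
def IdReq (a : ℝ → ℝ) (c : ℝ) (I : NN) : Prop :=
  I.Dm = 1 ∧ I.l 0 = 1 ∧ I.l 2 = 1 ∧ (I.l 1 : ℝ) ≤ c ∧
    ∀ x : ℕ → ℝ, I.fullReal a x 0 = x 0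

/-- The `d`-fold parallelization `I_d` of an identity skeleton. -/
def Idn (I : NN) (d : ℕ) : NN := parallel d fun _ => I

/-- Concatenate `m` identity networks after `φ`. -/
def padAfter (I φ : NN) : ℕ → NN
  | 0 => φ
  | m + 1 => comp (Idn I ((padAfter I φ m).l (padAfter I φ m).depth)) (padAfter I φ m)

/-- Concatenate `m` identity networks in front of `φ`. -/
def padBefore (I φ : NN) : ℕ → NN
  | 0 => φ
  | m + 1 => comp (padBefore I φ m) (Idn I ((padBefore I φ m).l 0))

/-- Diagonal ("staggered") parallelization `p_I(φ_1, …, φ_n)` of arbitrary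
skeletons, obtained by padding each `φ_q` with identity networks so that all
have equal depth and then parallelizing. -/
def dpar (I : NN) (n : ℕ) (ν : ℕ → NN) : NN :=
  parallel n fun q =>
    padAfter I (padBefore I (ν q) (∑ j ∈ Finset.range q, (ν j).depth))
      (∑ j ∈ Finset.Ico (q + 1) n, (ν j).depth)

end NN

/-! Replace every `f i` by its piecewise linear interpolant on a uniform grid: the interpolant
of a `K`-Lipschitz function is again `K`-Lipschitz and lies within `2 K δ` of it on the grid
range. With steps of order `ε / (d K²)` on `[-r, r]` for the inner functions and `ε / K` on the
range `[-4 d K r, 4 d K r]` of the inner sum for `f 0`, the composite is `ε`-close to `g_d`, and it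
is `√d K²`-Lipschitz because the `ℓ¹` norm is at most `√d` times the Euclidean one. An interpolant
with `N` cells is a combination of `2 N` ReLUs (`ReLU u - ReLU (u - δ)` is a ramp of height `δ`),
so the composite is a depth-four ReLU network with `d · 2N`, `1` and `2M` hidden neurons, that is
with `O(d³ K² r / ε)` parameters. -/

open Finset

def ramp (δ u : ℝ) : ℝ := min (max u 0) δ

lemma ramp_add {a δ : ℝ} (ha : 0 ≤ a) (hδ : 0 ≤ δ) (u : ℝ) :
    ramp (a + δ) u = ramp a u + ramp δ (u - a) := by
  simp only [ramp, min_def, max_def]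
  split_ifs <;> linarith

lemma sum_range_ramp {δ : ℝ} (hδ : 0 ≤ δ) (u : ℝ) (m : ℕ) :
    ∑ j ∈ range m, ramp δ (u - j * δ) = ramp (m * δ) u := by
  induction m with
  | zero => simp [ramp]
  | succ m ih =>
    rw [sum_range_succ, ih, Nat.cast_succ, add_mul, one_mul, ramp_add (by positivity) hδ]

lemma ramp_sub_ramp_mem_Icc {δ u v : ℝ} (hδ : 0 ≤ δ) (h : v ≤ u) :
    ramp δ u - ramp δ v ∈ Set.Icc 0 (u - v) := by
  simp only [ramp, min_def, max_def, Set.mem_Icc]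
  split_ifs <;> constructor <;> linarith

lemma ramp_of_nonpos {δ u : ℝ} (hδ : 0 ≤ δ) (hu : u ≤ 0) : ramp δ u = 0 := by
  rw [ramp, max_eq_right hu, min_eq_left hδ]

lemma ramp_of_le {δ u : ℝ} (hδ : 0 ≤ δ) (hu : δ ≤ u) : ramp δ u = δ := by
  rw [ramp, max_eq_left (hδ.trans hu), min_eq_right hu]

lemma ReLU_sub_ReLU_sub {δ : ℝ} (hδ : 0 ≤ δ) (u : ℝ) : ReLU u - ReLU (u - δ) = ramp δ u := by
  simp only [ReLU, ramp, min_def, max_def]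
  split_ifs <;> linarith

def gridSlope (F : ℝ → ℝ) (c δ : ℝ) (j : ℕ) : ℝ := (F (c + (j + 1) * δ) - F (c + j * δ)) / δ

/-- The piecewise linear interpolant of `F` at the nodes `c + j δ`, `j ≤ N`, constant outside
`[c, c + N δ]`. -/
def gridInterp (F : ℝ → ℝ) (c δ : ℝ) (N : ℕ) (t : ℝ) : ℝ :=
  F c + ∑ j ∈ range N, gridSlope F c δ j * ramp δ (t - (c + j * δ))

section GridInterp

variable {F : ℝ → ℝ} {K : ℝ}

lemma nonneg_of_abs_sub_le_mul_abs_sub (hF : ∀ x y, |F x - F y| ≤ K * |x - y|) : 0 ≤ K := by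
  simpa using (abs_nonneg _).trans (hF 1 0)

lemma abs_gridSlope_le (hF : ∀ x y, |F x - F y| ≤ K * |x - y|) {c δ : ℝ} (hδ : 0 < δ)
    (j : ℕ) : |gridSlope F c δ j| ≤ K := by
  rw [gridSlope, abs_div, abs_of_pos hδ, div_le_iff₀ hδ]
  simpa [add_mul, abs_of_pos hδ] using hF (c + (j + 1) * δ) (c + j * δ)

lemma gridInterp_sub_le (hF : ∀ x y, |F x - F y| ≤ K * |x - y|) {c δ : ℝ} (hδ : 0 < δ)
    (N : ℕ) {x y : ℝ} (hxy : x ≤ y) :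
    |gridInterp F c δ N y - gridInterp F c δ N x| ≤ K * (y - x) := by
  set w : ℕ → ℝ := fun j => ramp δ (y - (c + j * δ)) - ramp δ (x - (c + j * δ))
  have hw : ∀ j, w j ∈ Set.Icc 0 ((y - c) - (x - c)) := fun j => by
    simpa [w] using ramp_sub_ramp_mem_Icc (δ := δ) hδ.le
      (by linarith : x - (c + j * δ) ≤ y - (c + j * δ))
  have hsum : ∑ j ∈ range N, w j = ramp (N * δ) (y - c) - ramp (N * δ) (x - c) := by
    simp only [w, sum_sub_distrib, ← sum_range_ramp hδ.le, sub_sub]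
  calc |gridInterp F c δ N y - gridInterp F c δ N x|
      = |∑ j ∈ range N, gridSlope F c δ j * w j| := by
        simp only [gridInterp, w, mul_sub, sum_sub_distrib, add_sub_add_left_eq_sub]
    _ ≤ ∑ j ∈ range N, K * w j := by
        refine (abs_sum_le_sum_abs _ _).trans (sum_le_sum fun j _ => ?_)
        rw [abs_mul, abs_of_nonneg (hw j).1]
        exact mul_le_mul_of_nonneg_right (abs_gridSlope_le hF hδ j) (hw j).1
    _ ≤ K * (y - x) := by
        rw [← mul_sum, hsum]
        have := (ramp_sub_ramp_mem_Icc (δ := N * δ) (by positivity)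
          (by linarith : x - c ≤ y - c)).2
        exact mul_le_mul_of_nonneg_left (by linarith) (nonneg_of_abs_sub_le_mul_abs_sub hF)

lemma gridInterp_lipschitz (hF : ∀ x y, |F x - F y| ≤ K * |x - y|) {c δ : ℝ} (hδ : 0 < δ)
    (N : ℕ) (x y : ℝ) : |gridInterp F c δ N x - gridInterp F c δ N y| ≤ K * |x - y| := by
  rcases le_total x y with h | h
  · rw [abs_sub_comm, abs_sub_comm x, abs_of_nonneg (sub_nonneg.2 h)]
    exact gridInterp_sub_le hF hδ N h
  · rw [abs_of_nonneg (sub_nonneg.2 h)]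
    exact gridInterp_sub_le hF hδ N h

lemma gridInterp_grid (F : ℝ → ℝ) {c δ : ℝ} (hδ : 0 < δ) {N m : ℕ} (hm : m ≤ N) :
    gridInterp F c δ N (c + m * δ) = F (c + m * δ) := by
  have hcell : ∀ j : ℕ, c + m * δ - (c + j * δ) = ((m : ℝ) - j) * δ := fun j => by ring
  have hbelow : ∀ j ∈ range m, gridSlope F c δ j * ramp δ (c + m * δ - (c + j * δ)) =
      F (c + (j + 1 : ℕ) * δ) - F (c + j * δ) := fun j hj => by
    have : (1 : ℝ) ≤ m - j := by
      rw [le_sub_iff_add_le']; exact_mod_cast mem_range.1 hj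
    rw [hcell, ramp_of_le hδ.le (by nlinarith), gridSlope, div_mul_cancel₀ _ hδ.ne',
      Nat.cast_succ]
  have habove : ∀ j ∈ Ico m N, gridSlope F c δ j * ramp δ (c + m * δ - (c + j * δ)) = 0 :=
    fun j hj => by
      have : (m : ℝ) ≤ j := by exact_mod_cast (mem_Ico.1 hj).1
      rw [hcell, ramp_of_nonpos hδ.le (by nlinarith), mul_zero]
  rw [gridInterp, ← sum_range_add_sum_Ico _ hm, sum_congr rfl hbelow, sum_eq_zero habove,
    sum_range_sub (fun j : ℕ => F (c + j * δ))]
  simp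

lemma gridInterp_max_left (F : ℝ → ℝ) {c δ : ℝ} (hδ : 0 ≤ δ) (N : ℕ) (t : ℝ) :
    gridInterp F c δ N (max t c) = gridInterp F c δ N t := by
  rcases le_total c t with h | h
  · rw [max_eq_left h]
  · rw [max_eq_right h]
    refine congrArg (F c + ·) (sum_congr rfl fun j _ => ?_)
    have : 0 ≤ (j : ℝ) * δ := by positivity
    rw [ramp_of_nonpos hδ (by linarith), ramp_of_nonpos hδ (by linarith)]

lemma abs_gridInterp_sub_le (hF : ∀ x y, |F x - F y| ≤ K * |x - y|) {c δ : ℝ} (hδ : 0 < δ)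
    {N : ℕ} {t : ℝ} (hct : c ≤ t) (htN : t ≤ c + N * δ) :
    |gridInterp F c δ N t - F t| ≤ 2 * K * δ := by
  have hK := nonneg_of_abs_sub_le_mul_abs_sub hF
  set m := ⌊(t - c) / δ⌋₊
  have hmN : m ≤ N := Nat.floor_le_of_le (by rw [div_le_iff₀ hδ]; linarith)
  have hm_le : c + m * δ ≤ t := by
    have := Nat.floor_le (div_nonneg (sub_nonneg.2 hct) hδ.le)
    rw [le_div_iff₀ hδ] at this; linarith
  have hm_lt : t < c + m * δ + δ := by
    have := Nat.lt_floor_add_one ((t - c) / δ)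
    rw [div_lt_iff₀ hδ] at this; linarith
  have hdist : |t - (c + m * δ)| ≤ δ := by rw [abs_of_nonneg (by linarith)]; linarith
  calc |gridInterp F c δ N t - F t|
      = |(gridInterp F c δ N t - gridInterp F c δ N (c + m * δ)) + (F (c + m * δ) - F t)| := by
        rw [gridInterp_grid F hδ hmN]; ring_nf
    _ ≤ K * |t - (c + m * δ)| + K * |c + m * δ - t| :=
        (abs_add_le _ _).trans (add_le_add (gridInterp_lipschitz hF hδ N _ _) (hF _ _))
    _ ≤ 2 * K * δ := by
        rw [abs_sub_comm (c + m * δ)]; nlinarith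

lemma abs_gridInterp_sub_le_of_abs_le (hF : ∀ x y, |F x - F y| ≤ K * |x - y|) {r δ : ℝ}
    (hδ : 0 < δ) {N : ℕ} (hN : 2 * r ≤ N * δ) {t : ℝ} (ht : |t| ≤ r) :
    |gridInterp F (-r) δ N t - F t| ≤ 2 * K * δ :=
  abs_gridInterp_sub_le hF hδ (by linarith [(abs_le.1 ht).1]) (by linarith [(abs_le.1 ht).2])

lemma abs_gridInterp_le (hF : ∀ x y, |F x - F y| ≤ K * |x - y|) (hF0 : |F 0| ≤ K) {r δ : ℝ}
    (hr : 1 ≤ r) (hδ : 0 < δ) (hδr : δ ≤ r) {N : ℕ} (hN : 2 * r ≤ N * δ) {t : ℝ}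
    (ht : |t| ≤ r) : |gridInterp F (-r) δ N t| ≤ 4 * K * r := by
  have hK := nonneg_of_abs_sub_le_mul_abs_sub hF
  have hFt := hF t 0
  rw [sub_zero] at hFt
  have := abs_sub_abs_le_abs_sub (gridInterp F (-r) δ N t) (F t)
  have := abs_sub_abs_le_abs_sub (F t) (F 0)
  nlinarith [abs_gridInterp_sub_le_of_abs_le hF hδ hN ht]

end GridInterp

lemma sum_range_mul_div_mod {M : Type*} [AddCommMonoid M] (n m : ℕ) (g : ℕ → ℕ → M) :
    ∑ p ∈ range (n * m), g (p / m) (p % m) = ∑ i ∈ range n, ∑ j ∈ range m, g i j := by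
  induction n with
  | zero => simp
  | succ n ih =>
    rw [Nat.succ_mul, sum_range_add, ih, sum_range_succ]
    refine congrArg _ (sum_congr rfl fun j hj => ?_)
    have hj := mem_range.1 hj
    have hm : 0 < m := by omega
    rw [Nat.add_comm, Nat.add_mul_div_right _ _ hm, Nat.div_eq_of_lt hj, zero_add,
      Nat.add_mul_mod_self_right, Nat.mod_eq_of_lt hj]

/-- Neurons `q = 2 j` and `q = 2 j + 1` have knots `c + j δ` and `c + (j + 1) δ` and opposite
weights, so that together they contribute the `j`-th summand of `gridInterp`. -/
def reluCoef (F : ℝ → ℝ) (c δ : ℝ) (q : ℕ) : ℝ := (-1) ^ (q % 2) * gridSlope F c δ (q / 2)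

def reluKnot (c δ : ℝ) (q : ℕ) : ℝ := c + ((q / 2 + q % 2 : ℕ) : ℝ) * δ

lemma sum_reluCoef_mul_ReLU (F : ℝ → ℝ) {c δ : ℝ} (hδ : 0 ≤ δ) (N : ℕ) (t : ℝ) :
    ∑ q ∈ range (N * 2), reluCoef F c δ q * ReLU (t - reluKnot c δ q) =
      gridInterp F c δ N t - F c := by
  refine (sum_range_mul_div_mod N 2 fun j s =>
    (-1) ^ s * gridSlope F c δ j * ReLU (t - (c + ((j + s : ℕ) : ℝ) * δ))).trans ?_
  rw [gridInterp, add_sub_cancel_left]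
  refine sum_congr rfl fun j _ => ?_
  have hcell : t - (c + ((j + 1 : ℕ) : ℝ) * δ) = t - (c + j * δ) - δ := by push_cast; ring
  simp only [sum_range_succ, sum_range_zero, zero_add, pow_zero, pow_one, add_zero, hcell]
  rw [← ReLU_sub_ReLU_sub hδ]
  ring

namespace NN

/-- Hidden layers: `2 N` neurons per input coordinate `i` for the interpolant of `f (i + 1)` on
the grid `c + j δ`; one neuron holding their sum `S` as `ReLU (S - c₀)`, which loses nothing since
the interpolant of `f 0` on the grid `c₀ + j Δ`, realized by the last `2 M` neurons, is constant
below `c₀`. -/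
def interpSumNet (f : ℕ → ℝ → ℝ) (d : ℕ) (c δ : ℝ) (N : ℕ) (c₀ Δ : ℝ) (M : ℕ) : NN where
  Dm := 3
  l
    | 0 => d
    | 1 => d * (N * 2)
    | 2 => 1
    | 3 => M * 2
    | _ => 1
  V
    | 0 => fun p j => if j = p / (N * 2) then 1 else 0
    | 1 => fun _ p => reluCoef (f (p / (N * 2) + 1)) c δ (p % (N * 2))
    | 2 => fun _ _ => 1
    | _ => fun _ m => reluCoef (f 0) c₀ Δ m
  b
    | 0 => fun p => -reluKnot c δ (p % (N * 2))
    | 1 => fun _ => ∑ i ∈ range d, f (i + 1) c - c₀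
    | 2 => fun m => c₀ - reluKnot c₀ Δ m
    | _ => fun _ => f 0 c₀

section interpSumNet

variable {f : ℕ → ℝ → ℝ} {d : ℕ} {c δ : ℝ} {N : ℕ} {c₀ Δ : ℝ} {M : ℕ}

lemma interpSumNet_hidden_one (x : ℕ → ℝ) (p : ℕ) :
    (interpSumNet f d c δ N c₀ Δ M).hidden ReLU 1 (trunc d x) p =
      ReLU (trunc d x (p / (N * 2)) - reluKnot c δ (p % (N * 2))) := by
  show ReLU ((∑ j ∈ range d, (if j = p / (N * 2) then 1 else 0) * trunc d x j) +
    -reluKnot c δ (p % (N * 2))) = _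
  simp only [ite_mul, one_mul, zero_mul, sum_ite_eq', mem_range, trunc]
  split_ifs <;> ring_nf

lemma interpSumNet_hidden_two (hδ : 0 ≤ δ) (x : ℕ → ℝ) :
    (interpSumNet f d c δ N c₀ Δ M).hidden ReLU 2 (trunc d x) 0 =
      ReLU (∑ i ∈ range d, gridInterp (f (i + 1)) c δ N (trunc d x i) - c₀) := by
  show ReLU ((∑ p ∈ range (d * (N * 2)), reluCoef (f (p / (N * 2) + 1)) c δ (p % (N * 2)) *
    (interpSumNet f d c δ N c₀ Δ M).hidden ReLU 1 (trunc d x) p) +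
      (∑ i ∈ range d, f (i + 1) c - c₀)) = _
  simp only [interpSumNet_hidden_one]
  rw [sum_range_mul_div_mod d (N * 2) fun i q =>
    reluCoef (f (i + 1)) c δ q * ReLU (trunc d x i - reluKnot c δ q)]
  simp only [sum_reluCoef_mul_ReLU _ hδ, sum_sub_distrib]
  ring_nf

lemma interpSumNet_fullReal (hδ : 0 ≤ δ) (hΔ : 0 ≤ Δ) (x : ℕ → ℝ) :
    (interpSumNet f d c δ N c₀ Δ M).fullReal ReLU x 0 =
      gridInterp (f 0) c₀ Δ M (∑ i ∈ range d, gridInterp (f (i + 1)) c δ N (x i)) := by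
  have hshift : ∀ S m, ReLU (S - c₀) + (c₀ - reluKnot c₀ Δ m) = max S c₀ - reluKnot c₀ Δ m :=
    fun S m => by simp only [ReLU, max_def]; split_ifs <;> linarith
  have htrunc : ∑ i ∈ range d, gridInterp (f (i + 1)) c δ N (trunc d x i) =
      ∑ i ∈ range d, gridInterp (f (i + 1)) c δ N (x i) :=
    sum_congr rfl fun i hi => by rw [trunc, if_pos (mem_range.1 hi)]
  show (∑ m ∈ range (M * 2), reluCoef (f 0) c₀ Δ m * ReLU ((∑ q ∈ range 1, 1 *
    (interpSumNet f d c δ N c₀ Δ M).hidden ReLU 2 (trunc d x) q) + (c₀ - reluKnot c₀ Δ m))) +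
      f 0 c₀ = _
  rw [sum_range_one, one_mul, interpSumNet_hidden_two hδ]
  simp only [hshift]
  rw [sum_reluCoef_mul_ReLU _ hΔ, sub_add_cancel, gridInterp_max_left _ hΔ, htrunc]

lemma interpSumNet_realScalar (hδ : 0 ≤ δ) (hΔ : 0 ≤ Δ) (x : EuclideanSpace ℝ (Fin d)) :
    (interpSumNet f d c δ N c₀ Δ M).realScalar ReLU d x =
      gridInterp (f 0) c₀ Δ M (∑ i : Fin d, gridInterp (f (i + 1)) c δ N (x i)) := by
  rw [realScalar, interpSumNet_fullReal hδ hΔ,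
    ← Fin.sum_univ_eq_sum_range (fun i => gridInterp (f (i + 1)) c δ N (emb d x i))]
  simp [emb]

lemma interpSumNet_P :
    (interpSumNet f d c δ N c₀ Δ M).P = 2 * d ^ 2 * N + 4 * d * N + 6 * M + 2 := by
  simp only [P, depth, interpSumNet, sum_range_succ, sum_range_zero]
  ring

end interpSumNet

end NN

lemma EuclideanSpace.sum_abs_le_sqrt_card_mul_norm {ι : Type*} [Fintype ι]
    (v : EuclideanSpace ℝ ι) : ∑ i, |v i| ≤ √(Fintype.card ι) * ‖v‖ := by
  rw [EuclideanSpace.norm_eq, ← Real.sqrt_mul (Nat.cast_nonneg _)]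
  refine Real.le_sqrt_of_sq_le ?_
  simpa using sq_sum_le_card_mul_sum_sq (s := univ) (f := fun i => |v i|)

section InterpolatedSum

variable {f : ℕ → ℝ → ℝ} {K : ℝ}

lemma abs_comp_sum_sub_gridInterp_le {r : ℝ} (hr : 1 ≤ r)
    (hLip : ∀ i x y, |f i x - f i y| ≤ K * |x - y|) (h0 : ∀ i, |f i 0| ≤ K) {d N M : ℕ}
    {δ Δ : ℝ} (hδ : 0 < δ) (hΔ : 0 < Δ) (hδr : δ ≤ r) (hN : 2 * r ≤ N * δ)
    (hM : 2 * (4 * d * K * r) ≤ M * Δ) (x : Fin d → ℝ) (hx : ∀ i, |x i| ≤ r) :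
    |f 0 (∑ i : Fin d, f (i + 1) (x i)) - gridInterp (f 0) (-(4 * d * K * r)) Δ M
      (∑ i : Fin d, gridInterp (f (i + 1)) (-r) δ N (x i))| ≤
        2 * d * K ^ 2 * δ + 2 * K * Δ := by
  have hK := nonneg_of_abs_sub_le_mul_abs_sub (hLip 0)
  set T := ∑ i : Fin d, f (i + 1) (x i)
  set S := ∑ i : Fin d, gridInterp (f (i + 1)) (-r) δ N (x i)
  have hS : |S| ≤ 4 * d * K * r :=
    calc |S| ≤ ∑ i : Fin d, |gridInterp (f (i + 1)) (-r) δ N (x i)| := abs_sum_le_sum_abs _ _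
      _ ≤ ∑ _i : Fin d, 4 * K * r :=
        sum_le_sum fun i _ => abs_gridInterp_le (hLip _) (h0 _) hr hδ hδr hN (hx i)
      _ = 4 * d * K * r := by simp; ring
  have hTS : |T - S| ≤ d * (2 * K * δ) :=
    calc |T - S| ≤ ∑ i : Fin d, |gridInterp (f (i + 1)) (-r) δ N (x i) - f (i + 1) (x i)| := by
          rw [← sum_sub_distrib]
          exact (abs_sum_le_sum_abs _ _).trans_eq (sum_congr rfl fun i _ => abs_sub_comm _ _)
      _ ≤ ∑ _i : Fin d, 2 * K * δ :=
        sum_le_sum fun i _ => abs_gridInterp_sub_le_of_abs_le (hLip _) hδ hN (hx i)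
      _ = d * (2 * K * δ) := by simp
  have hout : |gridInterp (f 0) (-(4 * d * K * r)) Δ M S - f 0 S| ≤ 2 * K * Δ :=
    abs_gridInterp_sub_le_of_abs_le (hLip 0) hΔ hM hS
  calc _ ≤ |f 0 T - f 0 S| + |gridInterp (f 0) (-(4 * d * K * r)) Δ M S - f 0 S| := by
        rw [abs_sub_comm (gridInterp _ _ _ _ _)]; exact abs_sub_le _ _ _
    _ ≤ K * (d * (2 * K * δ)) + 2 * K * Δ :=
        add_le_add ((hLip 0 _ _).trans (mul_le_mul_of_nonneg_left hTS hK)) hout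
    _ = 2 * d * K ^ 2 * δ + 2 * K * Δ := by ring

lemma gridInterp_sum_gridInterp_lipschitz (hLip : ∀ i x y, |f i x - f i y| ≤ K * |x - y|)
    {d N M : ℕ} {c δ c₀ Δ : ℝ} (hδ : 0 < δ) (hΔ : 0 < Δ) (x y : EuclideanSpace ℝ (Fin d)) :
    |gridInterp (f 0) c₀ Δ M (∑ i : Fin d, gridInterp (f (i + 1)) c δ N (x i)) -
      gridInterp (f 0) c₀ Δ M (∑ i : Fin d, gridInterp (f (i + 1)) c δ N (y i))| ≤
        √d * K ^ 2 * ‖x - y‖ := by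
  have hK := nonneg_of_abs_sub_le_mul_abs_sub (hLip 0)
  calc _ ≤ K * |∑ i : Fin d, gridInterp (f (i + 1)) c δ N (x i) -
          ∑ i : Fin d, gridInterp (f (i + 1)) c δ N (y i)| :=
        gridInterp_lipschitz (hLip 0) hΔ M _ _
    _ ≤ K * (K * ∑ i, |x i - y i|) := by
        rw [← sum_sub_distrib, mul_sum]
        gcongr
        exact (abs_sum_le_sum_abs _ _).trans
          (sum_le_sum fun i _ => gridInterp_lipschitz (hLip _) hδ N _ _)
    _ ≤ K * (K * (√d * ‖x - y‖)) := by
        gcongr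
        simpa using EuclideanSpace.sum_abs_le_sqrt_card_mul_norm (x - y)
    _ = √d * K ^ 2 * ‖x - y‖ := by ring

end InterpolatedSum

section Parameters

variable {K r ε : ℝ} {d : ℕ}

lemma one_le_mul_sq_mul_div (hK : 1 ≤ K) (hr : 1 ≤ r) (hd : 1 ≤ d) (hε : 0 < ε)
    (hε1 : ε ≤ 1) : 1 ≤ d * K ^ 2 * r / ε := by
  have hd1 : (1 : ℝ) ≤ d := by exact_mod_cast hd
  rw [le_div_iff₀ hε, one_mul]
  nlinarith [one_le_mul_of_one_le_of_one_le hd1 (one_le_pow₀ (n := 2) hK)]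

lemma exists_grid_params (hK : 1 ≤ K) (hr : 1 ≤ r) (hd : 1 ≤ d) (hε : 0 < ε) (hε1 : ε ≤ 1) :
    ∃ (δ Δ : ℝ) (N M : ℕ), 0 < δ ∧ 0 < Δ ∧ δ ≤ r ∧ 2 * r ≤ N * δ ∧
      2 * (4 * d * K * r) ≤ M * Δ ∧ 2 * d * K ^ 2 * δ + 2 * K * Δ = ε ∧
      (N : ℝ) ≤ 9 * (d * K ^ 2 * r / ε) ∧ (M : ℝ) ≤ 33 * (d * K ^ 2 * r / ε) := by
  have hd0 : (0 : ℝ) < d := by exact_mod_cast hd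
  have hB := one_le_mul_sq_mul_div hK hr hd hε hε1
  set B := d * K ^ 2 * r / ε with hB_def
  have hδ : 0 < ε / (4 * d * K ^ 2) := by positivity
  have hΔ : 0 < ε / (4 * K) := by positivity
  have h8B : 8 * B * (ε / (4 * d * K ^ 2)) = 2 * r := by rw [hB_def]; field_simp; ring
  have h32B : 32 * B * (ε / (4 * K)) = 2 * (4 * d * K * r) := by
    rw [hB_def]; field_simp; ring
  refine ⟨ε / (4 * d * K ^ 2), ε / (4 * K), ⌈8 * B⌉₊, ⌈32 * B⌉₊, hδ, hΔ, ?_, ?_, ?_, ?_, ?_, ?_⟩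
  · nlinarith
  · rw [← h8B]; gcongr; exact Nat.le_ceil _
  · rw [← h32B]; gcongr; exact Nat.le_ceil _
  · field_simp; ring
  · linarith [Nat.ceil_lt_add_one (show 0 ≤ 8 * B by positivity)]
  · linarith [Nat.ceil_lt_add_one (show 0 ≤ 32 * B by positivity)]

lemma NN.interpSumNet_P_le (hK : 1 ≤ K) (hr : 1 ≤ r) (hd : 1 ≤ d) (hε : 0 < ε) (hε1 : ε ≤ 1)
    {f : ℕ → ℝ → ℝ} {c δ c₀ Δ : ℝ} {N M : ℕ} (hN : (N : ℝ) ≤ 9 * (d * K ^ 2 * r / ε))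
    (hM : (M : ℝ) ≤ 33 * (d * K ^ 2 * r / ε)) :
    ((NN.interpSumNet f d c δ N c₀ Δ M).P : ℝ) ≤
      5 / 6 * 10 ^ 3 * K ^ 4 * r * (d : ℝ) ^ 6 * ε⁻¹ := by
  have hd1 : (1 : ℝ) ≤ d := by exact_mod_cast hd
  have hB := one_le_mul_sq_mul_div hK hr hd hε hε1
  set B := d * K ^ 2 * r / ε with hB_def
  have hRHS : 5 / 6 * 10 ^ 3 * K ^ 4 * r * (d : ℝ) ^ 6 * ε⁻¹ =
      2500 / 3 * (d ^ 3 * K ^ 2) * (d ^ 2 * B) := by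
    rw [hB_def]; field_simp; ring
  have hdK : 1 ≤ (d : ℝ) ^ 3 * K ^ 2 :=
    one_le_mul_of_one_le_of_one_le (one_le_pow₀ hd1) (one_le_pow₀ hK)
  have hdB : B ≤ d ^ 2 * B := le_mul_of_one_le_left (by positivity) (one_le_pow₀ hd1)
  rw [NN.interpSumNet_P]
  push_cast
  calc 2 * (d : ℝ) ^ 2 * N + 4 * d * N + 6 * M + 2
      ≤ 2 * d ^ 2 * (9 * B) + 4 * d ^ 2 * (9 * B) + 6 * (33 * (d ^ 2 * B)) +
          2 * (d ^ 2 * B) := by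
        gcongr <;> nlinarith
    _ = 254 * (d ^ 2 * B) := by ring
    _ ≤ _ := by rw [hRHS]; nlinarith

end Parameters

/-- Proposition 7.2: Lipschitz functions of sums of one-dimensional Lipschitz
functions can be approximated by ReLU networks without the curse of
dimensionality. -/
theorem lipschitz_of_sum_approximation (K r : ℝ) (hK : 1 ≤ K) (hr : 1 ≤ r)
    (f : ℕ → ℝ → ℝ)
    (hLip : ∀ i : ℕ, ∀ x y : ℝ, |f i x - f i y| ≤ K * |x - y|)
    (h0 : ∀ i : ℕ, |f i 0| ≤ K) :
    ∀ d : ℕ, 0 < d → ∀ ε : ℝ, 0 < ε → ε ≤ 1 →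
      ∃ φ : NN, φ.l 0 = d ∧ φ.l φ.depth = 1 ∧
        (∀ x : EuclideanSpace ℝ (Fin d), (∀ i, |x i| ≤ r) →
          |f 0 (∑ i : Fin d, f ((i : ℕ) + 1) (x i)) - φ.realScalar ReLU d x| ≤ ε) ∧
        (∀ x y : EuclideanSpace ℝ (Fin d),
          |φ.realScalar ReLU d x - φ.realScalar ReLU d y| ≤
            Real.sqrt d * K ^ 2 * ‖x - y‖) ∧
        ((φ.P : ℝ) ≤ (5 / 6) * 10 ^ 3 * K ^ 4 * r * (d : ℝ) ^ 6 * ε⁻¹) := by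
  intro d hd ε hε hε1
  obtain ⟨δ, Δ, N, M, hδ, hΔ, hδr, hN, hM, herr, hN9, hM33⟩ :=
    exists_grid_params hK hr hd hε hε1
  refine ⟨NN.interpSumNet f d (-r) δ N (-(4 * d * K * r)) Δ M, rfl, rfl, fun x hx => ?_,
    fun x y => ?_, NN.interpSumNet_P_le hK hr hd hε hε1 hN9 hM33⟩
  · rw [NN.interpSumNet_realScalar hδ.le hΔ.le, ← herr]
    exact abs_comp_sum_sub_gridInterp_le hr hLip h0 hδ hΔ hδr hN hM x.ofLp hx
  · simp only [NN.interpSumNet_realScalar hδ.le hΔ.le]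
    exact gridInterp_sum_gridInterp_lipschitz hLip hδ hΔ x y
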